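/- Up to isomorphism, there are exactly six groups generated by invertible automata with 2 states over X = {0,1}: the trivial group, the cyclic group C₂ of order 2, the Klein group C₂ × C₂, the infinite cyclic group ℤ, the infinite dihedral group D_∞, and the lamplighter group ℤ ≀ C₂. Precisely: every G(A) with A a 2-state invertible automaton over X is isomorphic to one of these six groups, and each of the six occurs; for example the adding machine recursion a = σ(b,a), b = (b,a) generates ℤ (here b is the identity and a is the binary adding machine), the recursion a = σ(a,a), b = (a,b) generates D_∞, and the recursion a = σ(a,b), b = (a,b) generates the lamplighter group. -/

import Mathlib

/-- An invertible automaton over the two-letter alphabet `X = Bool` with set of states `S`: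
`out s` is the output permutation `π(s,·) : X ≃ X` of the state `s`, and `tr s x` is the
state `τ(s,x)` reached from `s` after reading the letter `x`. -/
structure BinAutomaton (S : Type*) where
  out : S → Equiv.Perm Bool
  tr : S → Bool → S

namespace BinAutomaton

variable {S : Type*}

/-- The action of the state `s` of the automaton `A` on finite binary words,
given by `s(xw) = π(s,x) · (τ(s,x))(w)`. -/
def act (A : BinAutomaton S) : S → List Bool → List Bool
  | _, [] => []
  | s, x :: w => A.out s x :: A.act (A.tr s x) w

@[simp] theorem act_nil (A : BinAutomaton S) (s : S) : A.act s [] = [] := rfl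

@[simp] theorem act_cons (A : BinAutomaton S) (s : S) (x : Bool) (w : List Bool) :
    A.act s (x :: w) = A.out s x :: A.act (A.tr s x) w := rfl

/-- The inverse automaton of `A`. -/
def invAut (A : BinAutomaton S) : BinAutomaton S where
  out s := (A.out s).symm
  tr s x := A.tr s ((A.out s).symm x)

@[simp] theorem invAut_out (A : BinAutomaton S) (s : S) :
    A.invAut.out s = (A.out s).symm := rfl

@[simp] theorem invAut_tr (A : BinAutomaton S) (s : S) (x : Bool) :
    A.invAut.tr s x = A.tr s ((A.out s).symm x) := rfl

theorem invAut_act_act (A : BinAutomaton S) (w : List Bool) :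
    ∀ s : S, A.invAut.act s (A.act s w) = w := by
  induction w with
  | nil => exact fun s => rfl
  | cons x w ih =>
    intro s
    simp only [act_cons, invAut_out, invAut_tr, Equiv.symm_apply_apply]
    rw [ih]

theorem act_invAut_act (A : BinAutomaton S) (w : List Bool) :
    ∀ s : S, A.act s (A.invAut.act s w) = w := by
  induction w with
  | nil => exact fun s => rfl
  | cons x w ih =>
    intro s
    simp only [act_cons, invAut_out, invAut_tr, Equiv.apply_symm_apply]
    rw [ih]

/-- The tree automorphism of `X* = List Bool` defined by the state `s` of the automaton `A`. -/
def toPerm (A : BinAutomaton S) (s : S) : Equiv.Perm (List Bool) where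
  toFun := A.act s
  invFun := A.invAut.act s
  left_inv w := A.invAut_act_act w s
  right_inv w := A.act_invAut_act w s

/-- The automaton group `G(A)`: the subgroup of the group of permutations of
`X* = List Bool` generated by the tree automorphisms defined by the states of `A`. -/
def autGroup (A : BinAutomaton S) : Subgroup (Equiv.Perm (List Bool)) :=
  Subgroup.closure (Set.range A.toPerm)

end BinAutomaton

/-- The nontrivial permutation (the transposition `σ`) of the two-letter alphabet `Bool`. -/
def flipPerm : Equiv.Perm Bool := ⟨Bool.not, Bool.not, Bool.not_not, Bool.not_not⟩

/-- The translation `a ↦ a + n` of `ℤ`. -/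
def shiftE (n : ℤ) : ℤ ≃ ℤ where
  toFun a := a + n
  invFun a := a - n
  left_inv a := by show a + n - n = a; omega
  right_inv a := by show a - n + n = a; omega

/-- The shift by `n` of a finitely supported function `ℤ →₀ ZMod 2`
(an element of `⊕_{i ∈ ℤ} ℤ/2ℤ`). -/
def shiftF (n : ℤ) (f : ℤ →₀ ZMod 2) : ℤ →₀ ZMod 2 :=
  Finsupp.equivMapDomain (shiftE n) f

theorem shiftF_apply (n : ℤ) (f : ℤ →₀ ZMod 2) (a : ℤ) : shiftF n f a = f (a - n) := rfl

theorem shiftF_add (n : ℤ) (f g : ℤ →₀ ZMod 2) :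
    shiftF n (f + g) = shiftF n f + shiftF n g := by
  ext a
  simp [shiftF_apply]

theorem shiftF_shiftF (m n : ℤ) (f : ℤ →₀ ZMod 2) :
    shiftF m (shiftF n f) = shiftF (m + n) f := by
  ext a
  rw [shiftF_apply, shiftF_apply, shiftF_apply]
  congr 1
  omega

theorem shiftF_zero (f : ℤ →₀ ZMod 2) : shiftF 0 f = f := by
  ext a
  rw [shiftF_apply, sub_zero]

theorem shiftF_zero_fun (n : ℤ) : shiftF n 0 = 0 := by
  ext a
  rw [shiftF_apply]
  rfl

/-- The lamplighter group `ℤ ≀ C₂`, i.e. the restricted wreath product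
`(⊕_{i ∈ ℤ} ℤ/2ℤ) ⋊ ℤ` where `ℤ` acts by shifting the coordinates.  It is realized
concretely as the set of pairs `(f, m)` with `f : ℤ →₀ ZMod 2` a finitely supported
function (an element of `⊕_{i ∈ ℤ} ℤ/2ℤ`) and `m : ℤ`, with the semidirect product
multiplication `(f, m) · (g, n) = (f + shift_m g, m + n)`. -/
structure Lamplighter where
  lamps : ℤ →₀ ZMod 2
  pos : ℤ

namespace Lamplighter

noncomputable instance : Mul Lamplighter :=
  ⟨fun x y => ⟨x.lamps + shiftF x.pos y.lamps, x.pos + y.pos⟩⟩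
instance : One Lamplighter := ⟨⟨0, 0⟩⟩
noncomputable instance : Inv Lamplighter :=
  ⟨fun x => ⟨shiftF (-x.pos) (-x.lamps), -x.pos⟩⟩

@[simp] theorem mul_lamps (x y : Lamplighter) :
    (x * y).lamps = x.lamps + shiftF x.pos y.lamps := rfl
@[simp] theorem mul_pos (x y : Lamplighter) : (x * y).pos = x.pos + y.pos := rfl
@[simp] theorem one_lamps : (1 : Lamplighter).lamps = 0 := rfl
@[simp] theorem one_pos : (1 : Lamplighter).pos = 0 := rfl
@[simp] theorem inv_lamps (x : Lamplighter) : x⁻¹.lamps = shiftF (-x.pos) (-x.lamps) := rfl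
@[simp] theorem inv_pos (x : Lamplighter) : x⁻¹.pos = -x.pos := rfl

@[ext] theorem ext {x y : Lamplighter} (h₁ : x.lamps = y.lamps) (h₂ : x.pos = y.pos) :
    x = y := by
  cases x; cases y; cases h₁; cases h₂; rfl

noncomputable instance : Group Lamplighter where
  mul := (· * ·)
  one := 1
  inv := (·⁻¹)
  mul_assoc x y z := by
    ext
    · simp [shiftF_add, shiftF_shiftF, add_assoc]
    · simp [add_assoc]
  one_mul x := by
    ext
    · simp [shiftF_zero]
    · simp
  mul_one x := by
    ext
    · simp [shiftF_zero_fun]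
    · simp
  inv_mul_cancel x := by
    ext
    · rw [mul_lamps, inv_lamps, inv_pos, ← shiftF_add, neg_add_cancel, shiftF_zero_fun,
        one_lamps]
    · rw [mul_pos, inv_pos, neg_add_cancel, one_pos]

end Lamplighter

/-- The adding machine automaton `a = σ(b,a)`, `b = (b,b)`: here `b` is the identity and
`a` is the binary adding machine; it generates `ℤ`. -/
def autAdding : BinAutomaton (Fin 2) :=
  ⟨![flipPerm, 1], ![fun x => if x then 0 else 1, fun _ => 1]⟩

/-- The automaton `a = σ(a,a)`, `b = (a,b)`; it generates the infinite dihedral group. -/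
def autDInf : BinAutomaton (Fin 2) :=
  ⟨![flipPerm, 1], ![fun _ => 0, fun x => if x then 1 else 0]⟩

/-- The automaton `a = σ(a,b)`, `b = (a,b)`; it generates the lamplighter group. -/
def autLamp : BinAutomaton (Fin 2) :=
  ⟨![flipPerm, 1], ![fun x => if x then 1 else 0, fun x => if x then 1 else 0]⟩


/-!
Write `a` and `b` for the two states. If both root permutations are trivial the group is
trivial, if both are `σ` every state acts as the automorphism flipping all letters, and otherwise
we may take `a = σ(a₀, a₁)` and `b = (b₀, b₁)`. Passing to the inverse automaton swaps `a₀` and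
`a₁`, and conjugating by the flip of all letters swaps both pairs of sections, so only the nine
tables with `a₀ ≤ a₁` and `b₀ ≤ b₁` remain. In each of them, relations are checked on a finite set
of group elements that is closed under taking sections (an identity `f = g` holds as soon as `f`
and `g` satisfy the same wreath recursion), and infinite order by a descent: if `g` acts as `σ`
at the root and `g²` has both sections equal to `g` or `g⁻¹`, then `g ^ (2m) = 1` forces
`g ^ m = 1` while odd powers of `g` move the first letter. The lamplighter group acts faithfully
on words read as power series over `ZMod 2`, by the truncated affine maps
`f ↦ (1 + X) ^ m * f + c`, and the states of `a = σ(a, b)`, `b = (a, b)` are its two generators.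
-/

open Equiv Subgroup

abbrev TreePerm := Perm (List Bool)

theorem apply_nil_eq_nil {g : TreePerm} {π : Perm Bool} {k : Bool → TreePerm}
    (hg : ∀ x w, g (x :: w) = π x :: k x w) : g [] = [] := by
  cases h : g [] with
  | nil => rfl
  | cons y v =>
    have hyv := hg (π.symm y) ((k (π.symm y)).symm v)
    rw [π.apply_symm_apply, apply_symm_apply, ← h] at hyv
    exact absurd (g.injective hyv) (List.cons_ne_nil _ _)

theorem map_not_involutive : Function.Involutive (List.map not) := fun w => by
  simp [Function.comp_def]

def flipAll : TreePerm := map_not_involutive.toPerm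

theorem flipAll_cons (x : Bool) (w : List Bool) : flipAll (x :: w) = (!x) :: flipAll w := rfl

theorem flipAll_mul_self : flipAll * flipAll = 1 := Equiv.ext map_not_involutive

namespace BinAutomaton

variable {S T : Type*} (A : BinAutomaton S)

@[ext] theorem ext {A B : BinAutomaton S} (hout : A.out = B.out) (htr : A.tr = B.tr) :
    A = B := by
  cases A
  cases B
  congr

theorem toPerm_cons (s : S) (x : Bool) (w : List Bool) :
    A.toPerm s (x :: w) = A.out s x :: A.toPerm (A.tr s x) w := rfl

theorem eq_toPerm_of_cons (f : S → TreePerm)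
    (hf : ∀ s x w, f s (x :: w) = A.out s x :: f (A.tr s x) w) : f = A.toPerm := by
  funext s
  ext w : 1
  induction w generalizing s with
  | nil => exact apply_nil_eq_nil (hf s)
  | cons x w ih => rw [hf, ih, toPerm_cons]

theorem eq_of_cons (f g : S → TreePerm)
    (hf : ∀ s x w, f s (x :: w) = A.out s x :: f (A.tr s x) w)
    (hg : ∀ s x w, g s (x :: w) = A.out s x :: g (A.tr s x) w) : f = g :=
  (A.eq_toPerm_of_cons f hf).trans (A.eq_toPerm_of_cons g hg).symm

theorem toPerm_eq_one (h : ∀ s, A.out s = 1) : A.toPerm = 1 :=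
  (A.eq_toPerm_of_cons 1 fun s x w => by simp [h]).symm

theorem toPerm_eq_flipAll (h : ∀ s, A.out s = flipPerm) : A.toPerm = fun _ => flipAll :=
  (A.eq_toPerm_of_cons _ fun s x w => by rw [h]; rfl).symm

theorem autGroup_eq_bot (h : ∀ s, A.out s = 1) : A.autGroup = ⊥ := by
  rw [autGroup, toPerm_eq_one A h, closure_eq_bot_iff]
  rintro - ⟨s, rfl⟩
  rfl

theorem autGroup_eq_zpowers_flipAll [Nonempty S] (h : ∀ s, A.out s = flipPerm) :
    A.autGroup = zpowers flipAll := by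
  rw [autGroup, toPerm_eq_flipAll A h, Set.range_const, zpowers_eq_closure]

def relabel (e : S ≃ T) : BinAutomaton T :=
  ⟨fun t => A.out (e.symm t), fun t x => e (A.tr (e.symm t) x)⟩

theorem toPerm_relabel (e : S ≃ T) (s : S) : (A.relabel e).toPerm (e s) = A.toPerm s := by
  have := (A.relabel e).eq_toPerm_of_cons (fun t => A.toPerm (e.symm t)) fun t x w => by
    simp [relabel, toPerm_cons]
  simp [← this]

theorem autGroup_relabel (e : S ≃ T) : (A.relabel e).autGroup = A.autGroup := by
  rw [autGroup, autGroup, ← e.surjective.range_comp]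
  simp only [Function.comp_def, toPerm_relabel]

theorem toPerm_invAut (s : S) : A.invAut.toPerm s = (A.toPerm s)⁻¹ :=
  Equiv.ext fun _ => rfl

theorem autGroup_invAut : A.invAut.autGroup = A.autGroup := by
  rw [autGroup, autGroup, ← closure_inv (Set.range A.toPerm), Set.inv_range]
  congr 2
  exact funext A.toPerm_invAut

def flipConj : BinAutomaton S :=
  ⟨A.out, fun s x => A.tr s (!x)⟩

theorem toPerm_flipConj : A.flipConj.toPerm = fun s => flipAll * A.toPerm s * flipAll := by
  refine (A.flipConj.eq_toPerm_of_cons _ fun s x w => ?_).symm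
  have hσ : ∀ (π : Perm Bool) (y : Bool), (!π (!y)) = π y := by decide
  simp only [Perm.mul_apply, flipAll_cons, toPerm_cons, hσ]
  rfl

theorem autGroup_flipConj :
    A.flipConj.autGroup = A.autGroup.map (MulAut.conj flipAll).toMonoidHom := by
  have hinv : flipAll⁻¹ = flipAll := inv_eq_of_mul_eq_one_right flipAll_mul_self
  rw [autGroup, autGroup, MonoidHom.map_closure, ← Set.range_comp, toPerm_flipConj]
  simp only [Function.comp_def, MulEquiv.coe_toMonoidHom, MulAut.conj_apply, hinv]

/-- The automaton `a = p(a₀, a₁)`, `b = q(b₀, b₁)` with states `a = 0` and `b = 1`. -/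
def ofTable (p q : Perm Bool) (a₀ a₁ b₀ b₁ : Fin 2) : BinAutomaton (Fin 2) :=
  ⟨![p, q], ![fun x => if x then a₁ else a₀, fun x => if x then b₁ else b₀]⟩

theorem eq_ofTable (A : BinAutomaton (Fin 2)) :
    A = ofTable (A.out 0) (A.out 1) (A.tr 0 false) (A.tr 0 true) (A.tr 1 false)
      (A.tr 1 true) := by
  ext s x <;> fin_cases s <;> (try cases x) <;> rfl

theorem relabel_swap_ofTable (p q : Perm Bool) (a₀ a₁ b₀ b₁ : Fin 2) :
    (ofTable p q a₀ a₁ b₀ b₁).relabel (swap 0 1) =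
      ofTable q p (swap 0 1 b₀) (swap 0 1 b₁) (swap 0 1 a₀) (swap 0 1 a₁) := by
  ext s x <;> fin_cases s <;> (try cases x) <;> rfl

theorem invAut_ofTable (a₀ a₁ b₀ b₁ : Fin 2) :
    (ofTable flipPerm 1 a₀ a₁ b₀ b₁).invAut = ofTable flipPerm 1 a₁ a₀ b₀ b₁ := by
  ext s x <;> fin_cases s <;> (try cases x) <;> rfl

theorem flipConj_ofTable (p q : Perm Bool) (a₀ a₁ b₀ b₁ : Fin 2) :
    (ofTable p q a₀ a₁ b₀ b₁).flipConj = ofTable p q a₁ a₀ b₁ b₀ := by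
  ext s x <;> fin_cases s <;> (try cases x) <;> rfl

theorem autGroup_eq_closure_pair (A : BinAutomaton (Fin 2)) :
    A.autGroup = closure {A.toPerm 0, A.toPerm 1} := by
  rw [autGroup, Fin.range_fin_succ, Fin.range_fin_succ, Set.range_eq_empty, insert_empty_eq]
  rfl

end BinAutomaton

theorem eq_one_of_cons {ι : Type*} (f : ι → TreePerm) (j : ι → Bool → ι)
    (hf : ∀ i x w, f i (x :: w) = x :: f (j i x) w) (i : ι) : f i = 1 := by
  rw [(BinAutomaton.mk 1 j).eq_toPerm_of_cons f hf, BinAutomaton.toPerm_eq_one _ fun _ => rfl]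
  rfl

theorem eq_one_of_cons_self {g : TreePerm} (hg : ∀ x w, g (x :: w) = x :: g w) : g = 1 :=
  eq_one_of_cons (fun _ : Unit => g) (fun _ _ => ()) (fun _ => hg) ()

theorem pow_two_mul_cons {g u : TreePerm} (hsq : ∀ x w, (g * g) (x :: w) = x :: u w) (m : ℕ)
    (x : Bool) (w : List Bool) : (g ^ (2 * m)) (x :: w) = x :: (u ^ m) w := by
  induction m generalizing w with
  | zero => rfl
  | succ m ih => rw [mul_add_one, pow_add, pow_succ u, sq, Perm.mul_apply, hsq, ih]; rfl

theorem not_isOfFinOrder_of_sq_cons {g u : TreePerm} (hroot : ∀ x, g [x] = [!x])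
    (hu : u = g ∨ u = g⁻¹) (hsq : ∀ x w, (g * g) (x :: w) = x :: u w) : ¬IsOfFinOrder g := by
  intro hfin
  have hpos := hfin.orderOf_pos
  have hone := pow_orderOf_eq_one g
  obtain ⟨m, hm | hm⟩ := Nat.even_or_odd' (orderOf g)
  · rw [hm] at hone
    have hum : u ^ m = 1 := Equiv.ext fun w => by
      simpa [hone] using (pow_two_mul_cons hsq m false w).symm
    have hgm : g ^ m = 1 := by
      rcases hu with rfl | rfl
      · exact hum
      · rwa [inv_pow, inv_eq_one] at hum
    have := orderOf_le_of_pow_eq_one (by omega) hgm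
    omega
  · have h := congrArg (· [false]) hone
    rw [hm, pow_succ, Perm.mul_apply, hroot, pow_two_mul_cons hsq] at h
    simp at h

section GroupRecognition

variable {G : Type*} [Group G]

theorem orderOf_eq_two_of_mul_self {a : G} (ha : a * a = 1) (ha₁ : a ≠ 1) : orderOf a = 2 :=
  orderOf_eq_prime (by rw [sq, ha]) ha₁

theorem closure_pair_eq_zpowers {a b : G} (hb : b ∈ zpowers a) : closure {a, b} = zpowers a := by
  rw [Set.insert_eq, Subgroup.closure_union, ← zpowers_eq_closure, ← zpowers_eq_closure,
    sup_eq_left, zpowers_le]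
  exact hb

theorem nonempty_mulEquiv_int_of_not_isOfFinOrder {g : G} (hg : ¬IsOfFinOrder g) :
    Nonempty (zpowers g ≃* Multiplicative ℤ) :=
  ⟨(MonoidHom.ofInjective (f := zpowersHom G g)
    (injective_zpow_iff_not_isOfFinOrder.2 hg)).symm⟩

theorem nonempty_mulEquiv_zmod_two_of_orderOf {g : G} (hg : orderOf g = 2) :
    Nonempty (zpowers g ≃* Multiplicative (ZMod 2)) :=
  ⟨mulEquivOfPrimeCardEq (p := 2) (by rw [Nat.card_zpowers, hg]) (by simp)⟩

theorem eq_one_or_eq_of_mem_zpowers {s x : G} (hs : orderOf s = 2) (hx : x ∈ zpowers s) :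
    x = 1 ∨ x = s := by
  obtain ⟨k, rfl⟩ := mem_zpowers_iff.1 hx
  rw [← zpow_mod_orderOf, hs]
  rcases Int.emod_two_eq_zero_or_one k with h | h <;> simp [h]

theorem nonempty_mulEquiv_kleinFour {s t : G} (hs : orderOf s = 2) (ht : orderOf t = 2)
    (hst : Commute s t) (hne : s ≠ t) :
    Nonempty (closure {s, t} ≃* Multiplicative (ZMod 2 × ZMod 2)) := by
  let φ := (zpowers s).subtype.noncommCoprod (zpowers t).subtype fun x y => by
    obtain ⟨i, hi⟩ := mem_zpowers_iff.1 x.2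
    obtain ⟨j, hj⟩ := mem_zpowers_iff.1 y.2
    simpa [← hi, ← hj] using hst.zpow_zpow i j
  have hdisj : Disjoint (zpowers s) (zpowers t) := by
    refine disjoint_def.2 fun {x} hxs hxt => ?_
    rcases eq_one_or_eq_of_mem_zpowers hs hxs with rfl | rfl
    · rfl
    rcases eq_one_or_eq_of_mem_zpowers ht hxt with h | h
    · simp [h] at hs
    · exact absurd h hne
  have hφ : Function.Injective φ := by
    rw [MonoidHom.noncommCoprod_injective]
    simpa using hdisj
  have hrange : φ.range = closure {s, t} := by
    rw [MonoidHom.noncommCoprod_range, range_subtype, range_subtype, Set.insert_eq,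
      Subgroup.closure_union, zpowers_eq_closure, zpowers_eq_closure]
  obtain ⟨es⟩ := nonempty_mulEquiv_zmod_two_of_orderOf hs
  obtain ⟨et⟩ := nonempty_mulEquiv_zmod_two_of_orderOf ht
  exact ⟨(MulEquiv.subgroupCongr hrange).symm.trans <| (MonoidHom.ofInjective hφ).symm.trans <|
    (es.prodCongr et).trans (MulEquiv.prodMultiplicative _ _).symm⟩

open DihedralGroup

theorem zpow_mul_eq_mul_zpow_neg {s d : G} (hs : s * s = 1) (hsd : s * d * s = d⁻¹) (i : ℤ) :
    d ^ i * s = s * d ^ (-i) := by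
  have hs' : s⁻¹ = s := inv_eq_of_mul_eq_one_right hs
  have hconj : s * d ^ i * s = d ^ (-i) := by
    calc s * d ^ i * s = (s * d * s⁻¹) ^ i := by rw [conj_zpow, hs']
      _ = d ^ (-i) := by rw [hs', hsd, inv_zpow, zpow_neg]
  rw [← hconj, ← mul_assoc, ← mul_assoc, hs, one_mul]

local notation "toInt" => ZMod.castHom (dvd_refl 0) ℤ

def dihedralHom (s d : G) (hs : s * s = 1) (hsd : s * d * s = d⁻¹) : DihedralGroup 0 →* G :=
  MonoidHom.mk' (fun | r i => d ^ toInt i | sr i => s * d ^ toInt i) <| by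
    have h := zpow_mul_eq_mul_zpow_neg hs hsd
    rintro (i | i) (j | j)
    · simp only [r_mul_r, map_add, zpow_add]
    · simp only [r_mul_sr, map_sub]
      rw [← mul_assoc, h, mul_assoc, ← zpow_add, neg_add_eq_sub]
    · simp only [sr_mul_r, map_add, zpow_add, mul_assoc]
    · simp only [sr_mul_sr, map_sub]
      rw [mul_assoc, ← mul_assoc (d ^ _), h, ← mul_assoc, ← mul_assoc, hs, one_mul, ← zpow_add,
        neg_add_eq_sub]

@[simp] theorem dihedralHom_r (s d : G) (hs hsd) (i : ZMod 0) :
    dihedralHom s d hs hsd (r i) = d ^ toInt i := rfl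

@[simp] theorem dihedralHom_sr (s d : G) (hs hsd) (i : ZMod 0) :
    dihedralHom s d hs hsd (sr i) = s * d ^ toInt i := rfl

theorem dihedralHom_injective {s d : G} (hs : s * s = 1) (hsd : s * d * s = d⁻¹)
    (hd : ¬IsOfFinOrder d) (hs₁ : s ≠ 1) : Function.Injective (dihedralHom s d hs hsd) := by
  have hpow : Function.Injective fun n : ℤ => d ^ n := injective_zpow_iff_not_isOfFinOrder.2 hd
  rw [injective_iff_map_eq_one]
  rintro (i | i) h
  · have : toInt i = toInt 0 := hpow (by simpa using h)
    rw [ZMod.castHom_injective _ this, DihedralGroup.one_def]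
  · have hsi : s = d ^ (-toInt i) := by
      rw [zpow_neg]
      exact eq_inv_of_mul_eq_one_left h
    have : -toInt i + -toInt i = 0 := hpow (by simp only [zpow_add, ← hsi, hs, zpow_zero])
    rw [show toInt i = 0 by omega, neg_zero, zpow_zero] at hsi
    exact absurd hsi hs₁

theorem nonempty_mulEquiv_dihedral {s t : G} (hs : s * s = 1) (ht : t * t = 1)
    (hst : ¬IsOfFinOrder (s * t)) : Nonempty (closure {s, t} ≃* DihedralGroup 0) := by
  have hsd : s * (s * t) * s = (s * t)⁻¹ := by
    rw [mul_inv_rev, inv_eq_of_mul_eq_one_right hs, inv_eq_of_mul_eq_one_right ht, ← mul_assoc,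
      hs, one_mul]
  have hs₁ : s ≠ 1 := by
    rintro rfl
    exact hst (isOfFinOrder_iff_pow_eq_one.2 ⟨2, two_pos, by simpa [sq] using ht⟩)
  have hrange : (dihedralHom s (s * t) hs hsd).range = closure {s, t} := by
    have hs_mem : s ∈ closure {s, t} := subset_closure (Set.mem_insert s {t})
    have ht_mem : t ∈ closure {s, t} := subset_closure (Set.mem_insert_of_mem s rfl)
    apply le_antisymm
    · rintro - ⟨i | i, rfl⟩
      · exact zpow_mem (mul_mem hs_mem ht_mem) _
      · exact mul_mem hs_mem (zpow_mem (mul_mem hs_mem ht_mem) _)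
    · rw [closure_le]
      rintro x (rfl | rfl)
      · exact ⟨sr 0, by simp⟩
      · exact ⟨sr 1, by simp [← mul_assoc, hs]⟩
  exact ⟨(MulEquiv.subgroupCongr hrange).symm.trans
    (MonoidHom.ofInjective (dihedralHom_injective hs hsd hst hs₁)).symm⟩

end GroupRecognition

def OneOfSix (G : Type*) [Group G] : Prop :=
  Nonempty (G ≃* Unit) ∨ Nonempty (G ≃* Multiplicative (ZMod 2)) ∨
    Nonempty (G ≃* Multiplicative (ZMod 2 × ZMod 2)) ∨ Nonempty (G ≃* Multiplicative ℤ) ∨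
    Nonempty (G ≃* DihedralGroup 0) ∨ Nonempty (G ≃* Lamplighter)

theorem OneOfSix.of_mulEquiv {G H : Type*} [Group G] [Group H] (e : G ≃* H)
    (h : OneOfSix H) : OneOfSix G := by
  have key : ∀ {K : Type} [Group K], Nonempty (H ≃* K) → Nonempty (G ≃* K) :=
    fun ⟨f⟩ => ⟨e.trans f⟩
  exact h.imp key <| .imp key <| .imp key <| .imp key <| .imp key key

namespace BinAutomaton

variable {S : Type*} (A : BinAutomaton S)

theorem nonempty_mulEquiv_unit_of_out_eq_one (h : ∀ s, A.out s = 1) :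
    Nonempty (A.autGroup ≃* Unit) :=
  ⟨(MulEquiv.subgroupCongr (A.autGroup_eq_bot h)).trans MulEquiv.ofUnique⟩

theorem nonempty_mulEquiv_zmod_two_of_out_eq_flip [Nonempty S]
    (h : ∀ s, A.out s = flipPerm) :
    Nonempty (A.autGroup ≃* Multiplicative (ZMod 2)) := by
  rw [A.autGroup_eq_zpowers_flipAll h]
  exact nonempty_mulEquiv_zmod_two_of_orderOf <|
    orderOf_eq_two_of_mul_self flipAll_mul_self (ne_of_apply_ne (· [false]) (by decide))

theorem oneOfSix_invAut : OneOfSix A.invAut.autGroup ↔ OneOfSix A.autGroup := by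
  rw [autGroup_invAut]

theorem oneOfSix_flipConj : OneOfSix A.flipConj.autGroup ↔ OneOfSix A.autGroup := by
  let e := (MulEquiv.subgroupCongr A.autGroup_flipConj).trans
    ((MulAut.conj flipAll).subgroupMap A.autGroup).symm
  exact ⟨(·.of_mulEquiv e.symm), (·.of_mulEquiv e)⟩

end BinAutomaton

namespace BinAutomaton

theorem autGroup_0000_kleinFour :
    Nonempty ((ofTable flipPerm 1 0 0 0 0).autGroup ≃* Multiplicative (ZMod 2 × ZMod 2)) := by
  set A := ofTable flipPerm 1 0 0 0 0
  set a := A.toPerm 0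
  set b := A.toPerm 1
  have hsq := eq_one_of_cons ![a * a, b * b] (fun _ _ => 0) <| by
    intro i x w; fin_cases i <;> cases x <;> rfl
  have hab : a * b = b * a := congrFun (BinAutomaton.eq_of_cons ⟨![flipPerm, flipPerm, 1],
    fun _ _ => 2⟩ ![a * b, b * a, a * a] ![b * a, a * b, a * a]
    (by intro i x w; fin_cases i <;> cases x <;> rfl)
    (by intro i x w; fin_cases i <;> cases x <;> rfl)) 0
  rw [autGroup_eq_closure_pair]
  exact nonempty_mulEquiv_kleinFour (orderOf_eq_two_of_mul_self (hsq 0)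
    (ne_of_apply_ne (· [false]) (by decide)))
    (orderOf_eq_two_of_mul_self (hsq 1) (ne_of_apply_ne (· [false, false]) (by decide))) hab
    (ne_of_apply_ne (· [false]) (by decide))

theorem autGroup_0001_dihedral :
    Nonempty ((ofTable flipPerm 1 0 0 0 1).autGroup ≃* DihedralGroup 0) := by
  set A := ofTable flipPerm 1 0 0 0 1
  set a := A.toPerm 0
  set b := A.toPerm 1
  have hsq := eq_one_of_cons ![a * a, b * b] ![fun _ => 0, fun x => if x then 1 else 0] <| by
    intro i x w; fin_cases i <;> cases x <;> rfl
  have haa : ∀ w, a (a w) = w := fun w => congrArg (· w) (hsq 0)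
  rw [autGroup_eq_closure_pair]
  refine nonempty_mulEquiv_dihedral (hsq 0) (hsq 1) <|
    not_isOfFinOrder_of_sq_cons (u := a * b) (by decide) (.inl rfl) fun x w => ?_
  cases x
  · exact congrArg (false :: ·) (congrArg (a * b) (haa w))
  · exact congrArg (true :: ·) (haa _)

theorem autGroup_0011_zmod_two :
    Nonempty ((ofTable flipPerm 1 0 0 1 1).autGroup ≃* Multiplicative (ZMod 2)) := by
  set A := ofTable flipPerm 1 0 0 1 1
  have hb : A.toPerm 1 = 1 := eq_one_of_cons_self fun x w => by cases x <;> rfl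
  have haa : A.toPerm 0 * A.toPerm 0 = 1 := eq_one_of_cons_self fun x w => by cases x <;> rfl
  rw [autGroup_eq_closure_pair, closure_pair_eq_zpowers (by simp [hb])]
  exact nonempty_mulEquiv_zmod_two_of_orderOf
    (orderOf_eq_two_of_mul_self haa (ne_of_apply_ne (· [false]) (by decide)))

theorem autGroup_0100_int :
    Nonempty ((ofTable flipPerm 1 0 1 0 0).autGroup ≃* Multiplicative ℤ) := by
  set A := ofTable flipPerm 1 0 1 0 0
  set a := A.toPerm 0
  set b := A.toPerm 1
  have hb : b = (a * a)⁻¹ := eq_inv_of_mul_eq_one_right <| eq_one_of_cons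
    ![a * a * b, b * a * a, a * b * a]
    ![fun x => if x then 2 else 1, fun x => if x then 0 else 2, fun x => if x then 0 else 1]
    (by intro i x w; fin_cases i <;> cases x <;> rfl) 0
  have hba : b * a = a⁻¹ := by rw [hb]; group
  have hab : a * b = a⁻¹ := by rw [hb]; group
  have hb_mem : b ∈ zpowers a := hb ▸ inv_mem (mul_mem (mem_zpowers a) (mem_zpowers a))
  rw [autGroup_eq_closure_pair, closure_pair_eq_zpowers hb_mem]
  refine nonempty_mulEquiv_int_of_not_isOfFinOrder <|
    not_isOfFinOrder_of_sq_cons (u := a⁻¹) (by decide) (.inr rfl) fun x w => ?_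
  cases x
  · exact congrArg (false :: ·) (congrArg (· w) hba)
  · exact congrArg (true :: ·) (congrArg (· w) hab)

theorem autGroup_0111_int :
    Nonempty ((ofTable flipPerm 1 0 1 1 1).autGroup ≃* Multiplicative ℤ) := by
  set A := ofTable flipPerm 1 0 1 1 1
  set a := A.toPerm 0
  have hb : A.toPerm 1 = 1 := eq_one_of_cons_self fun x w => by cases x <;> rfl
  rw [autGroup_eq_closure_pair, closure_pair_eq_zpowers (by simp [hb])]
  refine nonempty_mulEquiv_int_of_not_isOfFinOrder <|
    not_isOfFinOrder_of_sq_cons (u := a) (by decide) (.inl rfl) fun x w => ?_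
  cases x
  · exact congrArg (false :: ·) (congrArg (· (a w)) hb)
  · exact congrArg (true :: ·) (congrArg a (congrArg (· w) hb))

theorem autGroup_1100_kleinFour :
    Nonempty ((ofTable flipPerm 1 1 1 0 0).autGroup ≃* Multiplicative (ZMod 2 × ZMod 2)) := by
  set A := ofTable flipPerm 1 1 1 0 0
  set a := A.toPerm 0
  set b := A.toPerm 1
  have hsq := eq_one_of_cons ![a * a, b * b] (fun i _ => ![1, 0] i) <| by
    intro i x w; fin_cases i <;> cases x <;> rfl
  have hab : a * b = b * a := congrFun (BinAutomaton.eq_of_cons ⟨fun _ => flipPerm,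
    fun i _ => ![1, 0] i⟩ ![a * b, b * a] ![b * a, a * b]
    (by intro i x w; fin_cases i <;> cases x <;> rfl)
    (by intro i x w; fin_cases i <;> cases x <;> rfl)) 0
  rw [autGroup_eq_closure_pair]
  exact nonempty_mulEquiv_kleinFour (orderOf_eq_two_of_mul_self (hsq 0)
    (ne_of_apply_ne (· [false]) (by decide)))
    (orderOf_eq_two_of_mul_self (hsq 1) (ne_of_apply_ne (· [false, false]) (by decide))) hab
    (ne_of_apply_ne (· [false]) (by decide))

theorem autGroup_1101_dihedral :
    Nonempty ((ofTable flipPerm 1 1 1 0 1).autGroup ≃* DihedralGroup 0) := by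
  set A := ofTable flipPerm 1 1 1 0 1
  set a := A.toPerm 0
  set b := A.toPerm 1
  have hsq := eq_one_of_cons ![a * a, b * b] ![fun _ => 1, fun x => if x then 1 else 0] <| by
    intro i x w; fin_cases i <;> cases x <;> rfl
  have hbb : ∀ w, b (b w) = w := fun w => congrArg (· w) (hsq 1)
  have hinv : (a * b)⁻¹ = b * a := by
    rw [mul_inv_rev, inv_eq_of_mul_eq_one_right (hsq 0), inv_eq_of_mul_eq_one_right (hsq 1)]
  rw [autGroup_eq_closure_pair]
  refine nonempty_mulEquiv_dihedral (hsq 0) (hsq 1) <|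
    not_isOfFinOrder_of_sq_cons (u := (a * b)⁻¹) (by decide) (.inr rfl) fun x w => ?_
  rw [hinv]
  cases x
  · exact congrArg (false :: ·) (hbb _)
  · exact congrArg (true :: ·) (congrArg (b * a) (hbb w))

theorem autGroup_1111_zmod_two :
    Nonempty ((ofTable flipPerm 1 1 1 1 1).autGroup ≃* Multiplicative (ZMod 2)) := by
  set A := ofTable flipPerm 1 1 1 1 1
  have hb : A.toPerm 1 = 1 := eq_one_of_cons_self fun x w => by cases x <;> rfl
  have haa := eq_one_of_cons ![A.toPerm 0 * A.toPerm 0, A.toPerm 1 * A.toPerm 1] (fun _ _ => 1)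
    (by intro i x w; fin_cases i <;> cases x <;> rfl) 0
  rw [autGroup_eq_closure_pair, closure_pair_eq_zpowers (by simp [hb])]
  exact nonempty_mulEquiv_zmod_two_of_orderOf
    (orderOf_eq_two_of_mul_self haa (ne_of_apply_ne (· [false]) (by decide)))

end BinAutomaton

noncomputable section LamplighterAction

open PowerSeries

theorem coeff_mul_congr {R : Type*} [CommSemiring R] {n k : ℕ} (a : R⟦X⟧) {f g : R⟦X⟧}
    (h : ∀ i < n, coeff i f = coeff i g) (hk : k < n) : coeff k (a * f) = coeff k (a * g) := by
  have htrunc : trunc n f = trunc n g := Polynomial.ext fun i => by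
    simp only [coeff_trunc]
    split_ifs with hi
    exacts [h i hi, rfl]
  rw [coeff_mul_eq_coeff_trunc_mul_trunc _ _ hk, htrunc,
    ← coeff_mul_eq_coeff_trunc_mul_trunc _ _ hk]

theorem coeff_C_add_X_mul_zero {R : Type*} [Semiring R] (a : R) (f : R⟦X⟧) :
    coeff 0 (C a + X * f) = a := by
  simp

theorem coeff_C_add_X_mul_succ {R : Type*} [Semiring R] (a : R) (f : R⟦X⟧) (k : ℕ) :
    coeff (k + 1) (C a + X * f) = coeff k f := by
  simp [coeff_succ_X_mul]

theorem mk_one_eq_C_add_X_mul {R : Type*} [Semiring R] :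
    (PowerSeries.mk 1 : R⟦X⟧) = C 1 + X * PowerSeries.mk 1 := by
  ext (_ | k) <;> simp [coeff_succ_X_mul]

theorem coeff_one_add_X_pow {R : Type*} [Semiring R] (n k : ℕ) :
    coeff k ((1 + X : R⟦X⟧) ^ n) = (n.choose k : R) := by
  rw [← Polynomial.coeff_one_add_X_pow, ← Polynomial.coeff_coe]
  simp

theorem add_self_eq_zero_of_charTwo {R : Type*} [Ring R] [CharP R 2] (f : R⟦X⟧) :
    f + f = 0 := by
  ext n
  rw [map_add, CharTwo.add_self_eq_zero, map_zero]

/-- A binary word `x₀ x₁ ⋯` as the power series `x₀ + x₁ X + ⋯` over `ZMod 2`. -/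
def toSeries : List Bool → (ZMod 2)⟦X⟧
  | [] => 0
  | x :: w => C (x.toNat : ZMod 2) + X * toSeries w

def ofSeries (n : ℕ) (f : (ZMod 2)⟦X⟧) : List Bool :=
  List.ofFn fun i : Fin n => decide (coeff i f = 1)

theorem coeff_toSeries (w : List Bool) (k : ℕ) :
    coeff k (toSeries w) = ((w.getD k false).toNat : ZMod 2) := by
  induction w generalizing k with
  | nil => simp [toSeries]
  | cons x w ih =>
    cases k with
    | zero => exact coeff_C_add_X_mul_zero _ _
    | succ k => exact (coeff_C_add_X_mul_succ _ _ k).trans (ih k)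

theorem length_ofSeries (n : ℕ) (f : (ZMod 2)⟦X⟧) : (ofSeries n f).length = n :=
  List.length_ofFn

theorem ofSeries_congr {n : ℕ} {f g : (ZMod 2)⟦X⟧} (h : ∀ k < n, coeff k f = coeff k g) :
    ofSeries n f = ofSeries n g := by
  simp only [ofSeries]
  congr 1
  funext i
  rw [h i i.2]

theorem ofSeries_succ_C_add_X_mul (n : ℕ) (a : ZMod 2) (f : (ZMod 2)⟦X⟧) :
    ofSeries (n + 1) (C a + X * f) = decide (a = 1) :: ofSeries n f := by
  simp [ofSeries, List.ofFn_succ, coeff_succ_X_mul]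

theorem cast_toNat_decide_eq_one (a : ZMod 2) : ((decide (a = 1)).toNat : ZMod 2) = a := by
  revert a; decide

theorem ofSeries_toSeries (w : List Bool) : ofSeries w.length (toSeries w) = w := by
  induction w with
  | nil => rfl
  | cons x w ih => rw [List.length_cons, toSeries, ofSeries_succ_C_add_X_mul, ih]; cases x <;> rfl

theorem coeff_toSeries_ofSeries {n k : ℕ} (f : (ZMod 2)⟦X⟧) (hk : k < n) :
    coeff k (toSeries (ofSeries n f)) = coeff k f := by
  rw [coeff_toSeries, List.getD_eq_getElem _ _ (by rwa [length_ofSeries])]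
  simp only [ofSeries, List.getElem_ofFn, cast_toNat_decide_eq_one]

theorem eq_of_forall_ofSeries_eq {f g : (ZMod 2)⟦X⟧} (h : ∀ n, ofSeries n f = ofSeries n g) :
    f = g := by
  ext k
  rw [← coeff_toSeries_ofSeries f k.lt_succ_self, h, coeff_toSeries_ofSeries g k.lt_succ_self]

theorem one_add_X_mul_mk_one : (1 + X : (ZMod 2)⟦X⟧) * PowerSeries.mk 1 = 1 := by
  ext (_ | k)
  · simp
  · simp only [add_mul, one_mul, map_add, coeff_succ_X_mul, coeff_mk, coeff_one,
      Pi.one_apply, Nat.add_one_ne_zero, if_false]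
    decide

def oneAddX : (ZMod 2)⟦X⟧ˣ :=
  ⟨1 + X, PowerSeries.mk 1, one_add_X_mul_mk_one, by rw [mul_comm, one_add_X_mul_mk_one]⟩

def oneAddXZPow (m : ℤ) : (ZMod 2)⟦X⟧ := ((oneAddX ^ m : (ZMod 2)⟦X⟧ˣ) : (ZMod 2)⟦X⟧)

theorem oneAddXZPow_add (m n : ℤ) : oneAddXZPow (m + n) = oneAddXZPow m * oneAddXZPow n := by
  rw [oneAddXZPow, zpow_add, Units.val_mul]
  rfl

theorem oneAddXZPow_natCast (n : ℕ) : oneAddXZPow n = (1 + X) ^ n := by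
  rw [oneAddXZPow, zpow_natCast, Units.val_pow_eq_pow_val]
  rfl

theorem oneAddXZPow_neg_one : oneAddXZPow (-1) = PowerSeries.mk 1 := by
  rw [oneAddXZPow, zpow_neg_one]
  rfl

theorem oneAddXZPow_zero : oneAddXZPow 0 = 1 := by
  rw [oneAddXZPow, zpow_zero, Units.val_one]

theorem eq_zero_of_oneAddXZPow_eq_one {m : ℤ} (hm : oneAddXZPow m = 1) : m = 0 := by
  have hinf : ¬IsOfFinOrder oneAddX := by
    rw [isOfFinOrder_iff_pow_eq_one]
    rintro ⟨n, hn, hone⟩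
    have := coeff_one_add_X_pow (R := ZMod 2) n n
    rw [Nat.choose_self, Nat.cast_one, ← oneAddXZPow_natCast, oneAddXZPow, zpow_natCast, hone,
      Units.val_one, coeff_one, if_neg hn.ne'] at this
    exact zero_ne_one this
  refine injective_zpow_iff_not_isOfFinOrder.2 hinf (Units.ext ?_)
  simpa [oneAddXZPow] using hm

def lampSeries (f : ℤ →₀ ZMod 2) : (ZMod 2)⟦X⟧ :=
  Finsupp.linearCombination (ZMod 2) oneAddXZPow f

theorem lampSeries_add (f g : ℤ →₀ ZMod 2) : lampSeries (f + g) = lampSeries f + lampSeries g :=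
  map_add _ f g

theorem lampSeries_shiftF (m : ℤ) (f : ℤ →₀ ZMod 2) :
    lampSeries (shiftF m f) = oneAddXZPow m * lampSeries f := by
  rw [lampSeries, lampSeries, shiftF, Finsupp.equivMapDomain_eq_mapDomain,
    Finsupp.linearCombination_mapDomain, Finsupp.linearCombination_apply,
    Finsupp.linearCombination_apply, Finsupp.mul_sum]
  refine Finsupp.sum_congr fun k _ => ?_
  rw [Function.comp_apply, mul_smul_comm, ← oneAddXZPow_add, add_comm]
  rfl

/-- After multiplying by `(1 + X) ^ (-min)`, the terms of `lampSeries f` are the polynomials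
`(1 + X) ^ (k - min)`, and only the top one has a coefficient in degree `max - min`. -/
theorem lampSeries_eq_zero {f : ℤ →₀ ZMod 2} (hf : lampSeries f = 0) : f = 0 := by
  by_contra hne
  have hs : f.support.Nonempty := Finsupp.support_nonempty_iff.2 hne
  set m := f.support.min' hs
  set M := f.support.max' hs
  have hshift : oneAddXZPow (-m) * lampSeries f = ∑ k ∈ f.support, (1 + X) ^ (k - m).toNat := by
    rw [lampSeries, Finsupp.linearCombination_apply, Finsupp.mul_sum]
    refine Finset.sum_congr rfl fun k hk => ?_
    have hfk : f k = 1 := by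
      have := Finsupp.mem_support_iff.1 hk
      revert this; generalize f k = z; revert z; decide
    simp only [hfk, one_smul]
    rw [← oneAddXZPow_add, ← oneAddXZPow_natCast,
      Int.toNat_of_nonneg (by linarith [f.support.min'_le k hk]), neg_add_eq_sub]
  have htop : coeff (M - m).toNat (∑ k ∈ f.support, (1 + X : (ZMod 2)⟦X⟧) ^ (k - m).toNat) = 1 := by
    rw [map_sum, Finset.sum_eq_single M]
    · rw [coeff_one_add_X_pow, Nat.choose_self, Nat.cast_one]
    · intro k hk hkM
      have := lt_of_le_of_ne (f.support.le_max' k hk) hkM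
      have := f.support.min'_le k hk
      rw [coeff_one_add_X_pow, Nat.choose_eq_zero_of_lt (by omega), Nat.cast_zero]
    · exact fun h => absurd (f.support.max'_mem hs) h
  rw [← hshift, hf, mul_zero, map_zero] at htop
  exact zero_ne_one htop

/-- `g` acts on words as the affine map `f ↦ (1 + X) ^ g.pos * f + lampConst g`, truncated.
These constants form the cocycle of `lampConst_mul`, normalized so that the generators
`⟨single 0 1, 1⟩` and `⟨0, 1⟩` get `mk 1` and `1 + mk 1`. -/
def lampConst (g : Lamplighter) : (ZMod 2)⟦X⟧ :=
  lampSeries g.lamps + oneAddXZPow (g.pos - 1) + oneAddXZPow (-1)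

theorem lampConst_one : lampConst 1 = 0 := by
  rw [lampConst, Lamplighter.one_lamps, Lamplighter.one_pos, lampSeries, map_zero, zero_add,
    zero_sub, add_self_eq_zero_of_charTwo]

theorem lampConst_mul (g h : Lamplighter) :
    lampConst (g * h) = oneAddXZPow g.pos * lampConst h + lampConst g := by
  have hpow : oneAddXZPow (g.pos + h.pos - 1) = oneAddXZPow g.pos * oneAddXZPow (h.pos - 1) := by
    rw [← oneAddXZPow_add, add_sub_assoc]
  have hinv : oneAddXZPow (g.pos - 1) = oneAddXZPow g.pos * oneAddXZPow (-1) := by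
    rw [← oneAddXZPow_add, sub_eq_add_neg]
  rw [lampConst, lampConst, lampConst, Lamplighter.mul_lamps, Lamplighter.mul_pos, lampSeries_add,
    lampSeries_shiftF, hpow, hinv]
  linear_combination -add_self_eq_zero_of_charTwo (oneAddXZPow g.pos * oneAddXZPow (-1))

def lampAct (g : Lamplighter) (w : List Bool) : List Bool :=
  ofSeries w.length (oneAddXZPow g.pos * toSeries w + lampConst g)

theorem lampAct_one (w : List Bool) : lampAct 1 w = w := by
  rw [lampAct, lampConst_one, Lamplighter.one_pos, oneAddXZPow_zero, one_mul, add_zero,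
    ofSeries_toSeries]

theorem lampAct_mul (g h : Lamplighter) (w : List Bool) :
    lampAct (g * h) w = lampAct g (lampAct h w) := by
  have hassoc : oneAddXZPow (g * h).pos * toSeries w + lampConst (g * h) =
      oneAddXZPow g.pos * (oneAddXZPow h.pos * toSeries w + lampConst h) + lampConst g := by
    rw [lampConst_mul, Lamplighter.mul_pos, oneAddXZPow_add]
    ring
  rw [lampAct, lampAct, lampAct, length_ofSeries, hassoc]
  refine ofSeries_congr fun k hk => ?_
  rw [map_add, map_add,
    coeff_mul_congr _ (fun i hi => (coeff_toSeries_ofSeries _ hi).symm) hk]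

def lampHom : Lamplighter →* TreePerm where
  toFun g := ⟨lampAct g, lampAct g⁻¹, fun w => by rw [← lampAct_mul, inv_mul_cancel, lampAct_one],
    fun w => by rw [← lampAct_mul, mul_inv_cancel, lampAct_one]⟩
  map_one' := Equiv.ext lampAct_one
  map_mul' g h := Equiv.ext (lampAct_mul g h)

theorem toSeries_replicate_false (n : ℕ) : toSeries (List.replicate n false) = 0 := by
  induction n with
  | zero => rfl
  | succ n ih => simp [List.replicate_succ, toSeries, ih]

theorem lampHom_injective : Function.Injective lampHom := by
  rw [injective_iff_map_eq_one]
  intro g hg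
  have hfix : ∀ w, ofSeries w.length (oneAddXZPow g.pos * toSeries w + lampConst g) =
      ofSeries w.length (toSeries w) := fun w => by
    rw [ofSeries_toSeries]
    exact congrArg (· w) hg
  have hconst : lampConst g = 0 := eq_of_forall_ofSeries_eq fun n => by
    simpa [toSeries_replicate_false] using hfix (List.replicate n false)
  have hpos : g.pos = 0 := eq_zero_of_oneAddXZPow_eq_one <| eq_of_forall_ofSeries_eq
    (fun
      | 0 => rfl
      | n + 1 => by
        simpa [toSeries, toSeries_replicate_false, hconst] using
          hfix (true :: List.replicate n false))
  have hlamps : g.lamps = 0 := lampSeries_eq_zero <| by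
    rwa [lampConst, hpos, zero_sub, add_assoc, add_self_eq_zero_of_charTwo, add_zero] at hconst
  exact Lamplighter.ext hlamps hpos

/-- The lamplighter elements realized by the states `a = 0` and `b = 1` of `autLamp`. -/
def lampGen : Fin 2 → Lamplighter := ![⟨Finsupp.single 0 1, 1⟩, ⟨0, 1⟩]

theorem lampGen_pos (s : Fin 2) : (lampGen s).pos = 1 := by
  fin_cases s <;> rfl

theorem lampConst_lampGen (s : Fin 2) :
    lampConst (lampGen s) = C (s.val : ZMod 2) + PowerSeries.mk 1 := by
  fin_cases s <;>
    simp [lampGen, lampConst, lampSeries, oneAddXZPow_zero, oneAddXZPow_neg_one,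
      add_self_eq_zero_of_charTwo]

theorem lampAct_lampGen_cons (s : Fin 2) (x : Bool) (w : List Bool) :
    lampAct (lampGen s) (x :: w) = autLamp.out s x :: lampAct (lampGen (autLamp.tr s x)) w := by
  have hseries : ∀ (a b : ZMod 2) (W : (ZMod 2)⟦X⟧),
      (1 + X) * (C a + X * W) + (C b + PowerSeries.mk 1) =
        C (a + b + 1) + X * ((1 + X) * W + (C a + PowerSeries.mk 1)) := by
    intro a b W
    rw [map_add, map_add]
    linear_combination mk_one_eq_C_add_X_mul (R := ZMod 2)
  have hone : oneAddXZPow 1 = 1 + X := by simpa using oneAddXZPow_natCast 1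
  simp only [lampAct, lampGen_pos, lampConst_lampGen, hone, List.length_cons, toSeries, hseries,
    ofSeries_succ_C_add_X_mul]
  fin_cases s <;> cases x <;> rfl

theorem closure_range_lampGen : closure (Set.range lampGen) = ⊤ := by
  set H := closure (Set.range lampGen)
  have hgen : ∀ s, lampGen s ∈ H := fun s => subset_closure ⟨s, rfl⟩
  have hpos : ∀ m : ℤ, (⟨0, m⟩ : Lamplighter) ∈ H := fun m => by
    have hhom : ∀ m : ℤ, (⟨0, 1⟩ : Lamplighter) ^ m = ⟨0, m⟩ := fun m => by
      induction m using Int.induction_on with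
      | zero => rfl
      | succ k ih => rw [zpow_add_one, ih]; ext <;> simp [shiftF_zero_fun]
      | pred k ih => rw [zpow_sub_one, ih]; ext <;> simp [shiftF_zero_fun, sub_eq_add_neg]
    rw [← hhom]
    exact zpow_mem (hgen 1) m
  have hsingle : ∀ k : ℤ, (⟨Finsupp.single k 1, 0⟩ : Lamplighter) ∈ H := fun k => by
    have hconj : (⟨Finsupp.single k 1, 0⟩ : Lamplighter) =
        ⟨0, k⟩ * (lampGen 0 * (lampGen 1)⁻¹) * ⟨0, -k⟩ := by
      ext <;> simp [lampGen, shiftF, Finsupp.equivMapDomain_single, shiftE]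
    rw [hconj]
    exact mul_mem (mul_mem (hpos k) (mul_mem (hgen 0) (inv_mem (hgen 1)))) (hpos (-k))
  have hlamps : ∀ f : ℤ →₀ ZMod 2, (⟨f, 0⟩ : Lamplighter) ∈ H := fun f => by
    induction f using Finsupp.induction_linear with
    | zero => exact one_mem H
    | add f g hf hg =>
      have : (⟨f + g, 0⟩ : Lamplighter) = ⟨f, 0⟩ * ⟨g, 0⟩ := by ext <;> simp [shiftF_zero]
      rw [this]
      exact mul_mem hf hg
    | single k c =>
      obtain rfl | rfl : c = 0 ∨ c = 1 := by revert c; decide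
      · rw [Finsupp.single_zero]
        exact one_mem H
      · exact hsingle k
  refine eq_top_iff.2 fun g _ => ?_
  have : g = ⟨g.lamps, 0⟩ * ⟨0, g.pos⟩ := by ext <;> simp [shiftF_zero_fun]
  rw [this]
  exact mul_mem (hlamps _) (hpos _)

theorem lampHom_lampGen : (fun s => lampHom (lampGen s)) = autLamp.toPerm :=
  autLamp.eq_toPerm_of_cons _ fun s x w => lampAct_lampGen_cons s x w

theorem range_lampHom : lampHom.range = autLamp.autGroup := by
  rw [MonoidHom.range_eq_map, ← closure_range_lampGen, MonoidHom.map_closure, ← Set.range_comp,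
    BinAutomaton.autGroup, ← lampHom_lampGen]
  rfl

theorem nonempty_mulEquiv_autLamp : Nonempty (autLamp.autGroup ≃* Lamplighter) :=
  ⟨(MulEquiv.subgroupCongr range_lampHom).symm.trans (MonoidHom.ofInjective lampHom_injective).symm⟩

end LamplighterAction
namespace BinAutomaton

theorem oneOfSix_ofTable_flip_one (a₀ a₁ b₀ b₁ : Fin 2) :
    OneOfSix (ofTable flipPerm 1 a₀ a₁ b₀ b₁).autGroup := by
  wlog ha : a₀ ≤ a₁ generalizing a₀ a₁ b₀ b₁
  · rw [← invAut_ofTable, oneOfSix_invAut]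
    exact this a₁ a₀ b₀ b₁ (le_of_not_ge ha)
  wlog hb : b₀ ≤ b₁ generalizing b₀ b₁
  · rw [← flipConj_ofTable, oneOfSix_flipConj, ← invAut_ofTable, oneOfSix_invAut]
    exact this b₁ b₀ (le_of_not_ge hb)
  have hle : ∀ i j : Fin 2, i ≤ j → (i = 0 ∧ j = 0) ∨ (i = 0 ∧ j = 1) ∨ (i = 1 ∧ j = 1) := by
    decide
  obtain ⟨rfl, rfl⟩ | ⟨rfl, rfl⟩ | ⟨rfl, rfl⟩ := hle a₀ a₁ ha <;>
  obtain ⟨rfl, rfl⟩ | ⟨rfl, rfl⟩ | ⟨rfl, rfl⟩ := hle b₀ b₁ hb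
  · exact .inr <| .inr <| .inl autGroup_0000_kleinFour
  · exact .inr <| .inr <| .inr <| .inr <| .inl autGroup_0001_dihedral
  · exact .inr <| .inl autGroup_0011_zmod_two
  · exact .inr <| .inr <| .inr <| .inl autGroup_0100_int
  · exact .inr <| .inr <| .inr <| .inr <| .inr nonempty_mulEquiv_autLamp
  · exact .inr <| .inr <| .inr <| .inl autGroup_0111_int
  · exact .inr <| .inr <| .inl autGroup_1100_kleinFour
  · exact .inr <| .inr <| .inr <| .inr <| .inl autGroup_1101_dihedral
  · exact .inr <| .inl autGroup_1111_zmod_two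

theorem autGroup_ofTable_one_one_unit (a₀ a₁ b₀ b₁ : Fin 2) :
    Nonempty ((ofTable 1 1 a₀ a₁ b₀ b₁).autGroup ≃* Unit) :=
  nonempty_mulEquiv_unit_of_out_eq_one _ fun s => by fin_cases s <;> rfl

theorem oneOfSix_autGroup_fin_two (A : BinAutomaton (Fin 2)) : OneOfSix A.autGroup := by
  rw [eq_ofTable A]
  generalize A.out 0 = p, A.out 1 = q, A.tr 0 false = a₀, A.tr 0 true = a₁, A.tr 1 false = b₀,
    A.tr 1 true = b₁
  have hperm : ∀ π : Perm Bool, π = 1 ∨ π = flipPerm := by decide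
  rcases hperm p with rfl | rfl <;> rcases hperm q with rfl | rfl
  · exact .inl <| autGroup_ofTable_one_one_unit _ _ _ _
  · rw [← autGroup_relabel _ (swap 0 1), relabel_swap_ofTable]
    exact oneOfSix_ofTable_flip_one _ _ _ _
  · exact oneOfSix_ofTable_flip_one _ _ _ _
  · exact .inr <| .inl <|
      nonempty_mulEquiv_zmod_two_of_out_eq_flip _ fun s => by fin_cases s <;> rfl

theorem oneOfSix_autGroup {S : Type*} (e : S ≃ Fin 2) (A : BinAutomaton S) :
    OneOfSix A.autGroup :=
  A.autGroup_relabel e ▸ oneOfSix_autGroup_fin_two (A.relabel e)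

end BinAutomaton

theorem nonempty_mulEquiv_autAdding : Nonempty (autAdding.autGroup ≃* Multiplicative ℤ) := by
  have h : autAdding = (BinAutomaton.ofTable flipPerm 1 0 1 1 1).invAut := by
    ext s x <;> fin_cases s <;> (try cases x) <;> rfl
  rw [h, BinAutomaton.autGroup_invAut]
  exact BinAutomaton.autGroup_0111_int

theorem nonempty_mulEquiv_autDInf : Nonempty (autDInf.autGroup ≃* DihedralGroup 0) := by
  have h : autDInf = BinAutomaton.ofTable flipPerm 1 0 0 0 1 := by
    ext s x <;> fin_cases s <;> (try cases x) <;> rfl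
  rw [h]
  exact BinAutomaton.autGroup_0001_dihedral

theorem two_state_automaton_groups :
    (∀ (S : Type), Nonempty (S ≃ Fin 2) → ∀ A : BinAutomaton S,
      Nonempty (A.autGroup ≃* Unit) ∨
      Nonempty (A.autGroup ≃* Multiplicative (ZMod 2)) ∨
      Nonempty (A.autGroup ≃* Multiplicative (ZMod 2 × ZMod 2)) ∨
      Nonempty (A.autGroup ≃* Multiplicative ℤ) ∨
      Nonempty (A.autGroup ≃* DihedralGroup 0) ∨
      Nonempty (A.autGroup ≃* Lamplighter)) ∧
    (∃ A : BinAutomaton (Fin 2), Nonempty (A.autGroup ≃* Unit)) ∧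
    (∃ A : BinAutomaton (Fin 2), Nonempty (A.autGroup ≃* Multiplicative (ZMod 2))) ∧
    (∃ A : BinAutomaton (Fin 2),
      Nonempty (A.autGroup ≃* Multiplicative (ZMod 2 × ZMod 2))) ∧
    Nonempty (autAdding.autGroup ≃* Multiplicative ℤ) ∧
    Nonempty (autDInf.autGroup ≃* DihedralGroup 0) ∧
    Nonempty (autLamp.autGroup ≃* Lamplighter) :=
  ⟨fun _ ⟨e⟩ A => A.oneOfSix_autGroup e,
    ⟨_, BinAutomaton.autGroup_ofTable_one_one_unit 0 0 0 0⟩,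
    ⟨_, BinAutomaton.autGroup_0011_zmod_two⟩,
    ⟨_, BinAutomaton.autGroup_0000_kleinFour⟩,
    nonempty_mulEquiv_autAdding, nonempty_mulEquiv_autDInf, nonempty_mulEquiv_autLamp⟩
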